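/- Let T₁ and T₂ be 𝒜-trees and let T̄₁ = T₁|(𝒜(T₁) ∩ 𝒜(T₂)) and T̄₂ = T₂|(𝒜(T₁) ∩ 𝒜(T₂)). Then T₁ and T₂ are ancestrally compatible if and only if T̄₁ and T̄₂ are ancestrally compatible. -/

import Mathlib

/-!
Common framework: rooted labeled trees ("𝒜-trees") following Llabrés–Rocha–Rosselló–Valiente.

A `PreTree α V` is the raw data of a directed graph on (a finite subset of) `V` together with
a partial labeling of its nodes by labels in `α`.  The predicate `PreTree.IsATree` asserts that
this data is a finite rooted tree (the root reaches every node by a unique directed path),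
that the labeling is injective, and that every leaf is labeled.
-/

structure PreTree (α : Type) (V : Type) where
  nodes : Set V
  arc : V → V → Prop
  label : V → Option α

namespace PreTree

variable {α V W : Type}

/-- There is a directed path from `u` to `v` (possibly trivial). -/
def path (T : PreTree α V) (u v : V) : Prop := Relation.ReflTransGen T.arc u v

/-- There is a non-trivial directed path (length ≥ 1) from `u` to `v`. -/
def pathNT (T : PreTree α V) (u v : V) : Prop := Relation.TransGen T.arc u v

/-- `𝒜(T)`: the set of labels of all nodes of `T`. -/
def labelSet (T : PreTree α V) : Set α := {a | ∃ v, T.label v = some a}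

/-- `𝒜_T(v)`: the cluster of `v`, i.e. the set of labels of all descendants of `v`
(including `v` itself). -/
def cluster (T : PreTree α V) (v : V) : Set α := {a | ∃ w, T.path v w ∧ T.label w = some a}

/-- `𝒞_𝒜(T)`: the cluster representation of `T`. -/
def clusterRep (T : PreTree α V) : Set (Set α) := {C | ∃ v ∈ T.nodes, T.cluster v = C}

/-- A leaf is a node without children. -/
def IsLeaf (T : PreTree α V) (v : V) : Prop := v ∈ T.nodes ∧ ∀ w, ¬ T.arc v w

/-- `ℒ(T)`: the set of labels of the leaves of `T`. -/
def leafLabels (T : PreTree α V) : Set α := {a | ∃ v, T.IsLeaf v ∧ T.label v = some a}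

/-- A node is elementary when it has exactly one child. -/
def IsElementary (T : PreTree α V) (v : V) : Prop := ∃! w, T.arc v w

/-- `T` is an 𝒜-tree: a finite rooted tree (every node reachable from the root by a unique
directed path, which is captured by unique parents, acyclicity and reachability from a root)
with an injective partial labeling such that every leaf is labeled. -/
structure IsATree (T : PreTree α V) : Prop where
  finite_nodes : T.nodes.Finite
  arc_mem_left : ∀ {u v : V}, T.arc u v → u ∈ T.nodes
  arc_mem_right : ∀ {u v : V}, T.arc u v → v ∈ T.nodes
  parent_unique : ∀ {u v w : V}, T.arc u w → T.arc v w → u = v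
  acyclic : ∀ {u v : V}, T.arc u v → ¬ T.path v u
  rooted : T.nodes.Nonempty → ∃ r ∈ T.nodes, ∀ v ∈ T.nodes, T.path r v
  label_mem : ∀ {v : V} {a : α}, T.label v = some a → v ∈ T.nodes
  label_inj : ∀ {u v : V} {a : α}, T.label u = some a → T.label v = some a → u = v
  leaf_labeled : ∀ v ∈ T.nodes, (∀ w, ¬ T.arc v w) → ∃ a, T.label v = some a

/-- A semi-labeled tree over `𝒜` is an 𝒜-tree all of whose elementary nodes are labeled. -/
def IsSemiLabeled (T : PreTree α V) : Prop :=
  T.IsATree ∧ ∀ v ∈ T.nodes, T.IsElementary v → ∃ a, T.label v = some a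

open Classical in
/-- The restriction `T|X`: the subtree of `T` induced on the nodes whose cluster meets `X`,
keeping exactly the labels that belong to `X`. -/
noncomputable def restrict (T : PreTree α V) (X : Set α) : PreTree α V where
  nodes := {v | v ∈ T.nodes ∧ (T.cluster v ∩ X).Nonempty}
  arc u v := T.arc u v ∧ (T.cluster u ∩ X).Nonempty ∧ (T.cluster v ∩ X).Nonempty
  label v := if (∃ a ∈ X, T.label v = some a) then T.label v else none

/-- A weak topological embedding `f : S → T`: an injective map on nodes which preserves labels
and preserves and reflects directed paths. -/
def IsWTE (S : PreTree α V) (T : PreTree α W) (f : V → W) : Prop :=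
  (∀ v ∈ S.nodes, f v ∈ T.nodes) ∧
  (∀ u ∈ S.nodes, ∀ v ∈ S.nodes, f u = f v → u = v) ∧
  (∀ (v : V) (a : α), S.label v = some a → T.label (f v) = some a) ∧
  (∀ u ∈ S.nodes, ∀ v ∈ S.nodes, (S.path u v ↔ T.path (f u) (f v)))

/-- Two 𝒜-trees are ancestrally compatible when they admit weak topological embeddings into
a same 𝒜-tree. -/
def AncCompat (T₁ : PreTree α V) (T₂ : PreTree α W) : Prop :=
  ∃ (U : Type) (T : PreTree α U), T.IsATree ∧ (∃ f, IsWTE T₁ T f) ∧ (∃ g, IsWTE T₂ T g)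

/-- `m` is the most recent common ancestor of `x` and `y` in `T`. -/
def IsMRCA (T : PreTree α V) (x y m : V) : Prop :=
  T.path m x ∧ T.path m y ∧ ∀ n, T.path n x → T.path n y → T.path n m

/-- Local compatibility: condition (C1) on pairs of common labels and condition (C2)
on triples of common labels. -/
def LocallyCompatible (T₁ : PreTree α V) (T₂ : PreTree α W) : Prop :=
  (∀ (a b : α) (x₁ y₁ : V) (x₂ y₂ : W),
      T₁.label x₁ = some a → T₁.label y₁ = some b →
      T₂.label x₂ = some a → T₂.label y₂ = some b →
      (T₁.path x₁ y₁ ↔ T₂.path x₂ y₂)) ∧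
  (∀ (a b c : α) (va₁ vb₁ vc₁ m₁ m₁' : V) (va₂ vb₂ vc₂ m₂ m₂' : W),
      T₁.label va₁ = some a → T₁.label vb₁ = some b → T₁.label vc₁ = some c →
      T₂.label va₂ = some a → T₂.label vb₂ = some b → T₂.label vc₂ = some c →
      IsMRCA T₁ vb₁ vc₁ m₁ → IsMRCA T₁ va₁ vb₁ m₁' →
      IsMRCA T₂ va₂ vb₂ m₂ → IsMRCA T₂ vb₂ vc₂ m₂' →
      T₁.pathNT m₁ m₁' → ¬ T₂.pathNT m₂ m₂')

/-- `T` ancestrally displays `S`. -/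
def Displays (T : PreTree α W) (S : PreTree α V) : Prop :=
  S.labelSet ⊆ T.labelSet ∧
  (∀ (a b : α) (x y : V) (x' y' : W),
      S.label x = some a → S.label y = some b →
      T.label x' = some a → T.label y' = some b →
      (S.path x y ↔ T.path x' y')) ∧
  S.clusterRep ⊆ (T.restrict S.labelSet).clusterRep

/-- An unlabeled elementary node. -/
def ElemUnlab (T : PreTree α V) (v : V) : Prop := T.label v = none ∧ T.IsElementary v

/-- The semi-labeled tree obtained from `S` by removing its unlabeled elementary nodes and
replacing by single arcs the maximal paths all of whose intermediate nodes are unlabeled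
and elementary. -/
def contract (S : PreTree α V) : PreTree α V where
  nodes := {v | v ∈ S.nodes ∧ ¬ ElemUnlab S v}
  arc u v := (u ∈ S.nodes ∧ ¬ ElemUnlab S u) ∧ (v ∈ S.nodes ∧ ¬ ElemUnlab S v) ∧
    ∃ l : List V, List.Chain' S.arc (u :: (l ++ [v])) ∧ ∀ m ∈ l, ElemUnlab S m
  label := S.label

/-- `X` is the smallest member of the family `R` containing the label `a`. -/
def SmallestContaining (R : Set (Set α)) (a : α) (X : Set α) : Prop :=
  X ∈ R ∧ a ∈ X ∧ ∀ Y ∈ R, a ∈ Y → X ⊆ Y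

/-- `m_{ℓ,Y}`: the number of nodes of `T` whose cluster is `Y`. -/
noncomputable def mcount (T : PreTree α V) (Y : Set α) : ℕ :=
  {v | v ∈ T.nodes ∧ T.cluster v = Y}.ncard

/-- `𝒞 = 𝒞_𝒜(T₁) ∪ 𝒞_𝒜(T₂)`. -/
def joinC (T₁ : PreTree α V) (T₂ : PreTree α W) : Set (Set α) :=
  T₁.clusterRep ∪ T₂.clusterRep

/-- `n_Y = max (m_{1,Y}, m_{2,Y})`. -/
noncomputable def joinN (T₁ : PreTree α V) (T₂ : PreTree α W) (Y : Set α) : ℕ :=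
  max (mcount T₁ Y) (mcount T₂ Y)

open Classical in
/-- The join `T_{1,2}` of two 𝒜-trees with the same label set: nodes are the pairs
`w_{Y,j} = (Y, j)` with `Y ∈ 𝒞` and `1 ≤ j ≤ n_Y`, with the chain arcs `(w_{Y,j}, w_{Y,j-1})`
and the arcs `(w_{Y,1}, w_{Z,n_Z})` for `Z ⊊ Y` maximal in `𝒞`, and `w_{Y,1}` labeled `A`
exactly when `Y = (⋃ {Z ∈ 𝒞 ∣ Z ⊊ Y}) ⊔ {A}`. -/
noncomputable def join (T₁ : PreTree α V) (T₂ : PreTree α W) : PreTree α (Set α × ℕ) where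
  nodes := {p | p.1 ∈ joinC T₁ T₂ ∧ 1 ≤ p.2 ∧ p.2 ≤ joinN T₁ T₂ p.1}
  arc p q := p.1 ∈ joinC T₁ T₂ ∧ q.1 ∈ joinC T₁ T₂ ∧
    ((q.1 = p.1 ∧ p.2 = q.2 + 1 ∧ 1 ≤ q.2 ∧ p.2 ≤ joinN T₁ T₂ p.1) ∨
     (p.2 = 1 ∧ q.1 ⊂ p.1 ∧ q.2 = joinN T₁ T₂ q.1 ∧ 1 ≤ q.2 ∧
       ¬ ∃ Z ∈ joinC T₁ T₂, q.1 ⊂ Z ∧ Z ⊂ p.1))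
  label p :=
    if h : p.2 = 1 ∧ p.1 ∈ joinC T₁ T₂ ∧
        ∃ a : α, a ∉ ⋃₀ {Z ∈ joinC T₁ T₂ | Z ⊂ p.1} ∧
          p.1 = (⋃₀ {Z ∈ joinC T₁ T₂ | Z ⊂ p.1}) ∪ {a}
    then some h.2.2.choose else none

/-- The canonical map `f_ℓ : V(T_ℓ) → V(T_{1,2})`, sending the `i`-th node (from the bottom)
of the chain of nodes of `T` with cluster `Y` to `w_{Y,i}`. -/
noncomputable def joinMap (T : PreTree α V) (v : V) : Set α × ℕ :=
  (T.cluster v, {u | u ∈ T.nodes ∧ T.cluster u = T.cluster v ∧ T.pathNT v u}.ncard + 1)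

end PreTree

/-!
Restricting a common supertree of `T₁` and `T₂` gives one of their restrictions. Conversely,
let `T₁|X` and `T₂|X` embed into a tree `T`, which may be cut down to its labels in `X`. The
nodes of `T₁` outside `T₁|X` carry labels that occur neither in `T` nor in `T₂`, so `T₁` can be
grafted onto `T` along the embedding: each subtree of `T₁` hanging off `T₁|X` is attached below
the image of its attachment point, and a label outside `X` of a node of `T₁|X` goes to a fresh
copy of the image node. The result is a tree into which both `T₁` and `T` embed; grafting `T₂`
onto it in turn gives a common supertree of `T₁` and `T₂`.
-/

namespace PreTree

open Relation

variable {α V W U : Type}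

theorem cluster_subset_of_path {T : PreTree α V} {u v : V} (h : T.path u v) :
    T.cluster v ⊆ T.cluster u :=
  fun _ ⟨w, hw, hl⟩ => ⟨w, h.trans hw, hl⟩

theorem path_iff_eq_or_pathNT {T : PreTree α V} {u v : V} :
    T.path u v ↔ v = u ∨ T.pathNT u v :=
  reflTransGen_iff_eq_or_transGen

section Restrict

variable {T : PreTree α V} {X : Set α}

theorem path_of_restrict_path {u v : V} (h : (T.restrict X).path u v) : T.path u v :=
  ReflTransGen.mono (fun _ _ hab => hab.1) _ _ h

theorem restrict_path_of_path {u v : V} (h : T.path u v) (hv : v ∈ (T.restrict X).nodes) :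
    (T.restrict X).path u v := by
  induction h using ReflTransGen.head_induction_on with
  | refl => exact ReflTransGen.refl
  | head harc hpath ih =>
    obtain ⟨a, ha, haX⟩ := hv.2
    exact ReflTransGen.head
      ⟨harc, ⟨a, cluster_subset_of_path (ReflTransGen.head harc hpath) ha, haX⟩,
        ⟨a, cluster_subset_of_path hpath ha, haX⟩⟩ ih

theorem restrict_path_iff {u v : V} (hv : v ∈ (T.restrict X).nodes) :
    (T.restrict X).path u v ↔ T.path u v :=
  ⟨path_of_restrict_path, fun h => restrict_path_of_path h hv⟩

theorem restrict_label_eq_some {v : V} {a : α} :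
    (T.restrict X).label v = some a ↔ T.label v = some a ∧ a ∈ X := by
  simp only [restrict]
  split_ifs with h
  · refine ⟨fun hv => ⟨hv, ?_⟩, fun hv => hv.1⟩
    obtain ⟨b, hb, hvb⟩ := h
    exact (Option.some_injective _ (hv.symm.trans hvb)) ▸ hb
  · exact ⟨fun hv => hv.elim, fun hv => (h ⟨a, hv.2, hv.1⟩).elim⟩

theorem labelSet_restrict_subset : (T.restrict X).labelSet ⊆ X :=
  fun _ ⟨_, hv⟩ => (restrict_label_eq_some.1 hv).2

theorem mem_restrict_nodes_of_label (hT : T.IsATree) {v : V} {a : α} (hv : T.label v = some a)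
    (ha : a ∈ X) : v ∈ (T.restrict X).nodes :=
  ⟨hT.label_mem hv, a, ⟨v, ReflTransGen.refl, hv⟩, ha⟩

theorem IsATree.restrict (hT : T.IsATree) : (T.restrict X).IsATree where
  finite_nodes := hT.finite_nodes.subset fun _ hv => hv.1
  arc_mem_left h := ⟨hT.arc_mem_left h.1, h.2.1⟩
  arc_mem_right h := ⟨hT.arc_mem_right h.1, h.2.2⟩
  parent_unique h h' := hT.parent_unique h.1 h'.1
  acyclic h hp := hT.acyclic h.1 (path_of_restrict_path hp)
  rooted := by
    rintro ⟨v, hv⟩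
    obtain ⟨r, hr, hroot⟩ := hT.rooted ⟨v, hv.1⟩
    obtain ⟨a, ha, haX⟩ := hv.2
    exact ⟨r, ⟨hr, a, cluster_subset_of_path (hroot v hv.1) ha, haX⟩,
      fun z hz => restrict_path_of_path (hroot z hz.1) hz⟩
  label_mem h := mem_restrict_nodes_of_label hT (restrict_label_eq_some.1 h).1
    (restrict_label_eq_some.1 h).2
  label_inj hu hv := hT.label_inj (restrict_label_eq_some.1 hu).1 (restrict_label_eq_some.1 hv).1
  leaf_labeled := by
    rintro v ⟨-, a, ⟨w, hvw, hw⟩, haX⟩ hleaf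
    rcases ReflTransGen.cases_head hvw with rfl | ⟨c, hvc, hcw⟩
    · exact ⟨a, restrict_label_eq_some.2 ⟨hw, haX⟩⟩
    · exact (hleaf c ⟨hvc, ⟨a, ⟨w, hvw, hw⟩, haX⟩, ⟨a, ⟨w, hcw, hw⟩, haX⟩⟩).elim

end Restrict

section Embedding

theorem IsWTE.comp {S : PreTree α V} {T : PreTree α W} {R : PreTree α U} {f : V → W}
    {g : W → U} (hf : IsWTE S T f) (hg : IsWTE T R g) : IsWTE S R (g ∘ f) := by
  obtain ⟨hf₁, hf₂, hf₃, hf₄⟩ := hf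
  obtain ⟨hg₁, hg₂, hg₃, hg₄⟩ := hg
  exact ⟨fun v hv => hg₁ _ (hf₁ v hv),
    fun u hu v hv h => hf₂ u hu v hv (hg₂ _ (hf₁ u hu) _ (hf₁ v hv) h),
    fun v a h => hg₃ _ _ (hf₃ v a h),
    fun u hu v hv => (hf₄ u hu v hv).trans (hg₄ _ (hf₁ u hu) _ (hf₁ v hv))⟩

theorem isWTE_id (T : PreTree α V) : IsWTE T T id :=
  ⟨fun _ hv => hv, fun _ _ _ _ h => h, fun _ _ h => h, fun _ _ _ _ => Iff.rfl⟩

theorem isWTE_of_nodes_eq_empty {S : PreTree α V} {T : PreTree α W} (hS : S.IsATree)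
    (h : S.nodes = ∅) (f : V → W) : IsWTE S T f := by
  simp only [IsWTE, h, Set.mem_empty_iff_false, false_imp_iff, implies_true, true_and, and_true]
  exact fun v a hv => (h ▸ hS.label_mem hv : v ∈ (∅ : Set V)).elim

theorem isWTE_restrict_id (T : PreTree α V) (X : Set α) : IsWTE (T.restrict X) T id :=
  ⟨fun _ hv => hv.1, fun _ _ _ _ h => h, fun _ _ h => (restrict_label_eq_some.1 h).1,
    fun _ _ _ hv => restrict_path_iff hv⟩

theorem AncCompat.restrict {T₁ : PreTree α V} {T₂ : PreTree α W} (h : AncCompat T₁ T₂)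
    (X Y : Set α) : AncCompat (T₁.restrict X) (T₂.restrict Y) := by
  obtain ⟨U, T, hT, ⟨f, hf⟩, ⟨g, hg⟩⟩ := h
  exact ⟨U, T, hT, ⟨_, (isWTE_restrict_id T₁ X).comp hf⟩,
    ⟨_, (isWTE_restrict_id T₂ Y).comp hg⟩⟩

theorem IsWTE.restrict_right {R : PreTree α V} {T : PreTree α W} {X : Set α} {f : V → W}
    (hR : R.IsATree) (hf : IsWTE (R.restrict X) T f) : IsWTE (R.restrict X) (T.restrict X) f := by
  obtain ⟨hf₁, hf₂, hf₃, hf₄⟩ := hf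
  have hmem : ∀ v ∈ (R.restrict X).nodes, f v ∈ (T.restrict X).nodes := by
    rintro v hv
    obtain ⟨a, ⟨w, hvw, hw⟩, haX⟩ := hv.2
    have hw' : w ∈ (R.restrict X).nodes := mem_restrict_nodes_of_label hR hw haX
    have hfw : T.label (f w) = some a := hf₃ w a (restrict_label_eq_some.2 ⟨hw, haX⟩)
    exact ⟨hf₁ v hv, a, ⟨f w, (hf₄ v hv w hw').1 (restrict_path_of_path hvw hw'), hfw⟩,
      haX⟩
  refine ⟨hmem, hf₂,
    fun v a h => restrict_label_eq_some.2 ⟨hf₃ v a h, labelSet_restrict_subset ⟨v, h⟩⟩,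
    fun u hu v hv => ?_⟩
  rw [hf₄ u hu v hv, restrict_path_iff (hmem v hv)]

end Embedding

def IsPrivate (S : PreTree α V) (X : Set α) (v : V) : Prop :=
  v ∈ S.nodes ∧ v ∉ (S.restrict X).nodes

section Private

variable {S : PreTree α V} {X : Set α}

theorem IsATree.mem_nodes_of_path (hS : S.IsATree) {u v : V} (hu : u ∈ S.nodes)
    (h : S.path u v) : v ∈ S.nodes := by
  rcases ReflTransGen.cases_tail h with rfl | ⟨_, -, hc⟩
  exacts [hu, hS.arc_mem_right hc]

theorem IsPrivate.of_path (hS : S.IsATree) {p q : V} (hp : S.IsPrivate X p) (h : S.path p q) :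
    S.IsPrivate X q :=
  ⟨hS.mem_nodes_of_path hp.1 h, fun hq => hp.2 ⟨hp.1, hq.2.mono fun _ ha =>
    ⟨cluster_subset_of_path h ha.1, ha.2⟩⟩⟩

theorem IsPrivate.label_notMem {p : V} {a : α} (hp : S.IsPrivate X p) (h : S.label p = some a) :
    a ∉ X :=
  fun ha => hp.2 ⟨hp.1, a, ⟨p, ReflTransGen.refl, h⟩, ha⟩

theorem path_to_isPrivate_iff (hS : S.IsATree) {u v : V} (hu : u ∈ (S.restrict X).nodes)
    (hv : S.IsPrivate X v) :
    S.path u v ↔ ∃ s ∈ (S.restrict X).nodes, ∃ p, S.IsPrivate X p ∧ S.arc s p ∧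
      S.path p v ∧ S.path u s := by
  refine ⟨fun h => ?_,
    fun ⟨s, _, p, _, hsp, hpv, hus⟩ => hus.trans (ReflTransGen.head hsp hpv)⟩
  induction h using ReflTransGen.head_induction_on with
  | refl => exact (hv.2 hu).elim
  | @head a c harc hpath ih =>
    by_cases hc : c ∈ (S.restrict X).nodes
    · obtain ⟨s, hs, p, hp, hsp, hpv, hcs⟩ := ih hc
      exact ⟨s, hs, p, hp, hsp, hpv, ReflTransGen.head harc hcs⟩
    · exact ⟨a, hu, c, ⟨hS.arc_mem_right harc, hc⟩, harc, hpath, ReflTransGen.refl⟩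

end Private

inductive GraftNode (V U : Type) where
  | root
  | priv (v : V)
  | slot (u : U) (upper : Bool)

open GraftNode

open Classical in
/-- `graft S T X f` glues `S` onto `T` along `f : S|X → T`. Each node `u` of `T` is doubled into
`slot u true` above `slot u false`: the upper copy carries the label of the node of `S|X` sent to
`u` when that label lies outside `X`, the lower one carries the label of `u`. The private subtrees
of `S` hang below the lower copies, and a fresh root sits above the root of `T` and, when `S|X` is
empty, the root of `S`. -/
noncomputable def graft (S : PreTree α V) (T : PreTree α U) (X : Set α) (f : V → U) :
    PreTree α (GraftNode V U) where
  nodes := {x | match x with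
    | root => True
    | priv p => S.IsPrivate X p
    | slot u _ => u ∈ T.nodes}
  arc x y := match x, y with
    | root, priv p => S.IsPrivate X p ∧ ∀ z ∈ S.nodes, S.path p z
    | root, slot u true => u ∈ T.nodes ∧ ∀ z ∈ T.nodes, T.path u z
    | slot u true, slot u' false => u' = u ∧ u ∈ T.nodes
    | slot u false, slot u' true => T.arc u u'
    | slot u false, priv p =>
        S.IsPrivate X p ∧ ∃ s ∈ (S.restrict X).nodes, f s = u ∧ S.arc s p
    | priv p, priv q => S.IsPrivate X p ∧ S.arc p q
    | _, _ => False
  label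
    | root => none
    | priv p => if S.IsPrivate X p then S.label p else none
    | slot u true =>
      if h : ∃ s ∈ (S.restrict X).nodes, f s = u ∧ ∃ a ∉ X, S.label s = some a
      then S.label h.choose else none
    | slot u false => T.label u

open Classical in
noncomputable def graftEmbed (S : PreTree α V) (X : Set α) (f : V → U) (v : V) :
    GraftNode V U :=
  if v ∈ (S.restrict X).nodes then slot (f v) (decide (∃ a ∉ X, S.label v = some a))
  else priv v

def GraftReach (S : PreTree α V) (T : PreTree α U) (X : Set α) (f : V → U) :
    GraftNode V U → GraftNode V U → Prop
  | root, _ => True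
  | priv p, priv q => S.path p q
  | slot u i, slot u' j => (u' = u ∧ j ≤ i) ∨ T.pathNT u u'
  | slot u _, priv q => ∃ s ∈ (S.restrict X).nodes, ∃ p, S.IsPrivate X p ∧ S.arc s p ∧
      S.path p q ∧ T.path u (f s)
  | _, _ => False

section Graft

variable {S : PreTree α V} {T : PreTree α U} {X : Set α} {f : V → U}

theorem graftReach_of_path {x y : GraftNode V U} (h : (graft S T X f).path x y) :
    GraftReach S T X f x y := by
  induction h using ReflTransGen.head_induction_on with
  | refl =>
    rcases y with _ | p | ⟨u, i⟩
    exacts [trivial, ReflTransGen.refl, Or.inl ⟨rfl, le_rfl⟩]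
  | @head x c harc _ ih =>
    rcases x with _ | p | ⟨u, _ | _⟩ <;> rcases c with _ | p' | ⟨u', _ | _⟩ <;>
      simp only [graft] at harc <;> rcases y with _ | q | ⟨v, j⟩ <;>
      simp only [GraftReach] at ih ⊢
    case priv.priv.priv => exact ReflTransGen.head harc.2 ih
    case slot.false.priv.priv =>
      obtain ⟨hp', s, hs, rfl, hsp'⟩ := harc
      exact ⟨s, hs, p', hp', hsp', ih, ReflTransGen.refl⟩
    case slot.false.slot.true.priv =>
      obtain ⟨s, hs, p, hp, hsp, hpq, hu's⟩ := ih
      exact ⟨s, hs, p, hp, hsp, hpq, ReflTransGen.head harc hu's⟩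
    case slot.false.slot.true.slot =>
      rcases ih with ⟨rfl, -⟩ | hu'v
      exacts [Or.inr (TransGen.single harc), Or.inr (TransGen.head harc hu'v)]
    case slot.true.slot.false.priv =>
      obtain ⟨rfl, -⟩ := harc
      exact ih
    case slot.true.slot.false.slot =>
      obtain ⟨rfl, -⟩ := harc
      rcases ih with ⟨rfl, -⟩ | hu'v
      exacts [Or.inl ⟨rfl, Bool.le_true _⟩, Or.inr hu'v]

theorem graft_arc_root_priv {p : V} (hp : S.IsPrivate X p) (h : ∀ z ∈ S.nodes, S.path p z) :
    (graft S T X f).arc root (priv p) := ⟨hp, h⟩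

theorem graft_arc_root_slot {u : U} (hu : u ∈ T.nodes) (h : ∀ z ∈ T.nodes, T.path u z) :
    (graft S T X f).arc root (slot u true) := ⟨hu, h⟩

theorem graft_arc_priv {p q : V} (hp : S.IsPrivate X p) (h : S.arc p q) :
    (graft S T X f).arc (priv p) (priv q) := ⟨hp, h⟩

theorem graft_arc_slot_priv {s p : V} (hs : s ∈ (S.restrict X).nodes) (hp : S.IsPrivate X p)
    (h : S.arc s p) : (graft S T X f).arc (slot (f s) false) (priv p) := ⟨hp, s, hs, rfl, h⟩

theorem graft_arc_slot_true {u u' : U} (h : T.arc u u') :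
    (graft S T X f).arc (slot u false) (slot u' true) := h

theorem graft_arc_slot_false {u : U} (hu : u ∈ T.nodes) :
    (graft S T X f).arc (slot u true) (slot u false) := ⟨rfl, hu⟩

theorem graft_path_priv (hS : S.IsATree) {p q : V} (hp : S.IsPrivate X p) (h : S.path p q) :
    (graft S T X f).path (priv p) (priv q) := by
  induction h using ReflTransGen.head_induction_on with
  | refl => exact ReflTransGen.refl
  | head harc _ ih =>
    exact ReflTransGen.head (graft_arc_priv hp harc) (ih (hp.of_path hS (.single harc)))

theorem graft_path_priv_iff (hS : S.IsATree) {p q : V} (hp : S.IsPrivate X p) :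
    (graft S T X f).path (priv p) (priv q) ↔ S.path p q :=
  ⟨graftReach_of_path, graft_path_priv hS hp⟩

theorem graft_path_slot_lower (hT : T.IsATree) {u u' : U} (hu : u ∈ T.nodes) (h : T.path u u')
    (i : Bool) : (graft S T X f).path (slot u i) (slot u' false) := by
  have hstart : (graft S T X f).path (slot u i) (slot u false) := by
    cases i
    exacts [ReflTransGen.refl, ReflTransGen.single (graft_arc_slot_false hu)]
  induction h with
  | refl => exact hstart
  | @tail c u' _ harc ih =>
    exact (ih.tail (graft_arc_slot_true harc)).tail (graft_arc_slot_false (hT.arc_mem_right harc))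

theorem graft_path_slot_iff (hT : T.IsATree) {u u' : U} {i j : Bool} (hu : u ∈ T.nodes) :
    (graft S T X f).path (slot u i) (slot u' j) ↔ (u' = u ∧ j ≤ i) ∨ T.pathNT u u' := by
  refine ⟨graftReach_of_path, fun h => ?_⟩
  cases j
  · refine graft_path_slot_lower hT hu ?_ i
    rcases h with ⟨rfl, -⟩ | h
    exacts [ReflTransGen.refl, h.to_reflTransGen]
  · rcases h with ⟨rfl, hi⟩ | h
    · cases i
      exacts [absurd hi (by decide), ReflTransGen.refl]
    · obtain ⟨c, huc, hcu'⟩ := TransGen.tail'_iff.1 h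
      exact (graft_path_slot_lower hT hu huc i).tail (graft_arc_slot_true hcu')

theorem graft_path_slot_priv_iff (hS : S.IsATree) (hT : T.IsATree) {u : U} {i : Bool} {q : V}
    (hu : u ∈ T.nodes) :
    (graft S T X f).path (slot u i) (priv q) ↔ ∃ s ∈ (S.restrict X).nodes, ∃ p,
      S.IsPrivate X p ∧ S.arc s p ∧ S.path p q ∧ T.path u (f s) := by
  refine ⟨graftReach_of_path, fun ⟨s, hs, p, hp, hsp, hpq, hus⟩ => ?_⟩
  exact ((graft_path_slot_lower hT hu hus i).tail (graft_arc_slot_priv hs hp hsp)).trans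
    (graft_path_priv hS hp hpq)

theorem graftEmbed_of_mem {s : V} (hs : s ∈ (S.restrict X).nodes) :
    ∃ i, graftEmbed S X f s = slot (f s) i :=
  ⟨_, if_pos hs⟩

theorem graftEmbed_of_label_notMem {s : V} {a : α} (hs : s ∈ (S.restrict X).nodes)
    (h : S.label s = some a) (ha : a ∉ X) : graftEmbed S X f s = slot (f s) true := by
  have hex : ∃ a ∉ X, S.label s = some a := ⟨a, ha, h⟩
  simp [graftEmbed, hs, hex]

theorem graftEmbed_of_label_mem {s : V} {a : α} (hs : s ∈ (S.restrict X).nodes)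
    (h : S.label s = some a) (ha : a ∈ X) : graftEmbed S X f s = slot (f s) false := by
  simp [graftEmbed, hs, h, ha]

theorem graftEmbed_of_notMem {p : V} (hp : p ∉ (S.restrict X).nodes) :
    graftEmbed S X f p = priv p :=
  if_neg hp

theorem graft_label_priv {p : V} (hp : S.IsPrivate X p) :
    (graft S T X f).label (priv p) = S.label p :=
  if_pos hp

theorem graft_label_slot_true (hf : IsWTE (S.restrict X) T f) {s : V} {a : α}
    (hs : s ∈ (S.restrict X).nodes) (h : S.label s = some a) (ha : a ∉ X) :
    (graft S T X f).label (slot (f s) true) = some a := by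
  have hex : ∃ s' ∈ (S.restrict X).nodes, f s' = f s ∧ ∃ a ∉ X, S.label s' = some a :=
    ⟨s, hs, rfl, a, ha, h⟩
  obtain ⟨hs', hfs', -⟩ := hex.choose_spec
  simp only [graft, dif_pos hex]
  rw [hf.2.1 _ hs' _ hs hfs', h]

theorem graft_label_eq_some (hX : S.labelSet ∩ T.labelSet ⊆ X) {x : GraftNode V U} {a : α}
    (h : (graft S T X f).label x = some a) :
    (∃ u, x = slot u false ∧ T.label u = some a) ∨
      (a ∉ T.labelSet ∧ ∃ s, S.label s = some a ∧ x = graftEmbed S X f s) := by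
  have hS : ∀ {s}, S.label s = some a → a ∉ X → a ∉ T.labelSet :=
    fun hs ha haT => ha (hX ⟨⟨_, hs⟩, haT⟩)
  rcases x with _ | p | ⟨u, _ | _⟩
  · cases h
  · by_cases hp : S.IsPrivate X p
    · rw [graft_label_priv hp] at h
      exact .inr ⟨hS h (hp.label_notMem h), p, h, (graftEmbed_of_notMem hp.2).symm⟩
    · simp [graft, hp] at h
  · exact .inl ⟨u, rfl, h⟩
  · simp only [graft] at h
    split_ifs at h with hex
    obtain ⟨hs, hfs, b, hb, hsb⟩ := hex.choose_spec
    obtain rfl : b = a := Option.some_injective _ (hsb.symm.trans h)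
    exact .inr ⟨hS h hb, _, h, by rw [graftEmbed_of_label_notMem hs h hb, hfs]⟩

theorem graftEmbed_mem_nodes (hf : IsWTE (S.restrict X) T f) {v : V} (hv : v ∈ S.nodes) :
    graftEmbed S X f v ∈ (graft S T X f).nodes := by
  by_cases hsh : v ∈ (S.restrict X).nodes
  · obtain ⟨i, hi⟩ := graftEmbed_of_mem (f := f) hsh
    rw [hi]
    exact hf.1 v hsh
  · rw [graftEmbed_of_notMem hsh]
    exact ⟨hv, hsh⟩

theorem graft_finite_nodes (hS : S.IsATree) (hT : T.IsATree) : (graft S T X f).nodes.Finite := by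
  refine (((hS.finite_nodes.image priv).union ((hT.finite_nodes.prod Set.finite_univ).image
    fun p : U × Bool => slot p.1 p.2)).insert root).subset ?_
  rintro (_ | p | ⟨u, i⟩) hx
  exacts [.inl rfl, .inr (.inl ⟨p, hx.1, rfl⟩), .inr (.inr ⟨(u, i), ⟨hx, trivial⟩, rfl⟩)]

theorem graft_arc_mem_nodes (hS : S.IsATree) (hT : T.IsATree) (hf : IsWTE (S.restrict X) T f)
    {x y : GraftNode V U} (h : (graft S T X f).arc x y) :
    x ∈ (graft S T X f).nodes ∧ y ∈ (graft S T X f).nodes := by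
  rcases x with _ | p | ⟨u, _ | _⟩ <;> rcases y with _ | q | ⟨v, _ | _⟩ <;>
    simp only [graft, Set.mem_ofPred_eq] at h ⊢
  case root.priv => exact ⟨trivial, h.1⟩
  case root.slot.true => exact ⟨trivial, h.1⟩
  case priv.priv => exact ⟨h.1, h.1.of_path hS (.single h.2)⟩
  case slot.false.priv =>
    obtain ⟨hq, s, hs, rfl, -⟩ := h
    exact ⟨hf.1 s hs, hq⟩
  case slot.false.slot.true => exact ⟨hT.arc_mem_left h, hT.arc_mem_right h⟩
  case slot.true.slot.false => exact ⟨h.2, h.1 ▸ h.2⟩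

theorem graft_parent_unique (hS : S.IsATree) (hT : T.IsATree) {x y z : GraftNode V U}
    (hx : (graft S T X f).arc x z) (hy : (graft S T X f).arc y z) : x = y := by
  have root_priv : ∀ {p q}, (graft S T X f).arc root (priv q) →
      (graft S T X f).arc p (priv q) → p = root := by
    rintro (_ | p | ⟨u, _ | _⟩) q ⟨-, hq⟩ h <;> first | rfl | simp only [graft] at h
    · exact (hS.acyclic h.2 (hq p h.1.1)).elim
    · obtain ⟨-, s, hs, -, hsq⟩ := h
      exact (hS.acyclic hsq (hq s hs.1)).elim
  have root_slot : ∀ {p v}, (graft S T X f).arc root (slot v true) →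
      (graft S T X f).arc p (slot v true) → p = root := by
    rintro (_ | p | ⟨u, _ | _⟩) v ⟨-, hv⟩ h <;> first | rfl | simp only [graft] at h
    exact (hT.acyclic h (hv u (hT.arc_mem_left h))).elim
  rcases x with _ | p | ⟨u, _ | _⟩ <;> rcases y with _ | q | ⟨v, _ | _⟩ <;>
    rcases z with _ | r | ⟨w, _ | _⟩ <;>
    first
    | rfl
    | exact (root_priv hx hy).symm
    | exact root_priv hy hx
    | exact (root_slot hx hy).symm
    | exact root_slot hy hx
    | simp only [graft] at hx hy
  case priv.priv.priv => rw [hS.parent_unique hx.2 hy.2]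
  case priv.slot.false.priv =>
    obtain ⟨-, s, hs, -, hsr⟩ := hy
    exact (hx.1.2 (hS.parent_unique hx.2 hsr ▸ hs)).elim
  case slot.false.priv.priv =>
    obtain ⟨-, s, hs, -, hsr⟩ := hx
    exact (hy.1.2 (hS.parent_unique hy.2 hsr ▸ hs)).elim
  case slot.false.slot.false.priv =>
    obtain ⟨-, s, -, rfl, hsr⟩ := hx
    obtain ⟨-, s', -, rfl, hs'r⟩ := hy
    rw [hS.parent_unique hsr hs'r]
  case slot.false.slot.false.slot.true => rw [hT.parent_unique hx hy]
  case slot.true.slot.true.slot.false => rw [← hx.1, ← hy.1]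

theorem graft_acyclic (hS : S.IsATree) (hT : T.IsATree) {x y : GraftNode V U}
    (hxy : (graft S T X f).arc x y) (hyx : (graft S T X f).path y x) : False := by
  have hreach := graftReach_of_path hyx
  rcases x with _ | p | ⟨u, _ | _⟩ <;> rcases y with _ | q | ⟨v, _ | _⟩ <;>
    simp only [graft] at hxy <;> simp only [GraftReach] at hreach
  case priv.priv => exact hS.acyclic hxy.2 hreach
  case slot.false.slot.true =>
    rcases hreach with ⟨rfl, -⟩ | hvu
    exacts [hT.acyclic hxy ReflTransGen.refl, hT.acyclic hxy hvu.to_reflTransGen]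
  case slot.true.slot.false =>
    obtain ⟨rfl, -⟩ := hxy
    rcases hreach with ⟨-, h⟩ | huu
    · exact absurd h (by decide)
    · obtain ⟨c, huc, hcu⟩ := TransGen.head'_iff.1 huu
      exact hT.acyclic huc hcu

theorem graft_path_root (hS : S.IsATree) (hT : T.IsATree) (hf : IsWTE (S.restrict X) T f)
    {x : GraftNode V U} (hx : x ∈ (graft S T X f).nodes) : (graft S T X f).path root x := by
  have from_root : ∀ {u : U}, u ∈ T.nodes → ∃ t, (graft S T X f).arc root (slot t true) ∧
      T.path t u := fun hu => by
    obtain ⟨t, ht, hroot⟩ := hT.rooted ⟨_, hu⟩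
    exact ⟨t, graft_arc_root_slot ht hroot, hroot _ hu⟩
  rcases x with _ | p | ⟨u, i⟩
  · exact ReflTransGen.refl
  · obtain ⟨r, hr, hroot⟩ := hS.rooted ⟨p, hx.1⟩
    by_cases hsh : r ∈ (S.restrict X).nodes
    · obtain ⟨s, hs, q, hq, hsq, hqp, -⟩ := (path_to_isPrivate_iff hS hsh hx).1 (hroot p hx.1)
      obtain ⟨t, hrt, hts⟩ := from_root (hf.1 s hs)
      exact ReflTransGen.head hrt <| (graft_path_slot_priv_iff hS hT hrt.1).2
        ⟨s, hs, q, hq, hsq, hqp, hts⟩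
    · exact ReflTransGen.head (graft_arc_root_priv ⟨hr, hsh⟩ hroot)
        (graft_path_priv hS ⟨hr, hsh⟩ (hroot p hx.1))
  · obtain ⟨t, hrt, htu⟩ := from_root hx
    refine ReflTransGen.head hrt ((graft_path_slot_iff hT hrt.1).2 ?_)
    rcases path_iff_eq_or_pathNT.1 htu with rfl | htu
    exacts [.inl ⟨rfl, Bool.le_true i⟩, .inr htu]

theorem graft_leaf_labeled (hS : S.IsATree) (hT : T.IsATree) (hf : IsWTE (S.restrict X) T f)
    (hne : S.nodes.Nonempty) {x : GraftNode V U} (hx : x ∈ (graft S T X f).nodes)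
    (hleaf : ∀ y, ¬ (graft S T X f).arc x y) : ∃ a, (graft S T X f).label x = some a := by
  rcases x with _ | p | ⟨u, _ | _⟩
  · obtain ⟨v, hv⟩ := hne
    have hpath := graft_path_root hS hT hf (graftEmbed_mem_nodes hf hv)
    rcases ReflTransGen.cases_head hpath with heq | ⟨c, hc, -⟩
    · unfold graftEmbed at heq
      split_ifs at heq
    · exact (hleaf c hc).elim
  · rw [graft_label_priv hx]
    exact hS.leaf_labeled p hx.1 fun w hpw => hleaf _ (graft_arc_priv hx hpw)
  · exact hT.leaf_labeled u hx fun w huw => hleaf _ (graft_arc_slot_true huw)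
  · exact (hleaf _ (graft_arc_slot_false hx)).elim

theorem IsATree.graft (hS : S.IsATree) (hT : T.IsATree) (hf : IsWTE (S.restrict X) T f)
    (hX : S.labelSet ∩ T.labelSet ⊆ X) (hne : S.nodes.Nonempty) : (graft S T X f).IsATree where
  finite_nodes := graft_finite_nodes hS hT
  arc_mem_left h := (graft_arc_mem_nodes hS hT hf h).1
  arc_mem_right h := (graft_arc_mem_nodes hS hT hf h).2
  parent_unique := graft_parent_unique hS hT
  acyclic := graft_acyclic hS hT
  rooted _ := ⟨root, trivial, fun _ => graft_path_root hS hT hf⟩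
  label_mem h := by
    rcases graft_label_eq_some hX h with ⟨u, rfl, hu⟩ | ⟨-, s, hs, rfl⟩
    exacts [hT.label_mem hu, graftEmbed_mem_nodes hf (hS.label_mem hs)]
  label_inj hx hy := by
    rcases graft_label_eq_some hX hx with ⟨u, rfl, hu⟩ | ⟨haT, s, hs, rfl⟩ <;>
      rcases graft_label_eq_some hX hy with ⟨v, rfl, hv⟩ | ⟨haT', s', hs', rfl⟩
    · rw [hT.label_inj hu hv]
    · exact (haT' ⟨u, hu⟩).elim
    · exact (haT ⟨v, hv⟩).elim
    · rw [hS.label_inj hs hs']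
  leaf_labeled _ := graft_leaf_labeled hS hT hf hne

theorem graft_path_slot_iff_of_ne (hT : T.IsATree) {u u' : U} {i j : Bool} (hu : u ∈ T.nodes)
    (hne : u ≠ u') : (graft S T X f).path (slot u i) (slot u' j) ↔ T.path u u' := by
  rw [graft_path_slot_iff hT hu, path_iff_eq_or_pathNT]
  simp only [Ne.symm hne, false_and, false_or]

theorem isWTE_graft_slot (hT : T.IsATree) :
    IsWTE T (graft S T X f) fun u => slot u false := by
  refine ⟨fun _ hu => hu, fun _ _ _ _ h => (slot.inj h).1, fun _ _ h => h, fun u hu v _ => ?_⟩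
  rw [graft_path_slot_iff hT hu, path_iff_eq_or_pathNT]
  simp only [le_refl, and_true]

theorem graft_path_slot_priv_iff_of_path (hS : S.IsATree) (hT : T.IsATree)
    (hf : IsWTE (S.restrict X) T f) {u : V} (hu : u ∈ (S.restrict X).nodes) {i : Bool} {q : V}
    (hq : S.IsPrivate X q) : (graft S T X f).path (slot (f u) i) (priv q) ↔ S.path u q := by
  rw [graft_path_slot_priv_iff hS hT (hf.1 u hu), path_to_isPrivate_iff hS hu hq]
  refine exists_congr fun s => and_congr_right fun hs => ?_
  simp only [← hf.2.2.2 u hu s hs, restrict_path_iff hs]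

theorem graftEmbed_injective (hf : IsWTE (S.restrict X) T f) :
    Function.Injective (graftEmbed S X f) := by
  intro u v h
  by_cases hu : u ∈ (S.restrict X).nodes <;> by_cases hv : v ∈ (S.restrict X).nodes
  · obtain ⟨i, hi⟩ := graftEmbed_of_mem (f := f) hu
    obtain ⟨j, hj⟩ := graftEmbed_of_mem (f := f) hv
    rw [hi, hj] at h
    exact hf.2.1 u hu v hv (slot.inj h).1
  · obtain ⟨i, hi⟩ := graftEmbed_of_mem (f := f) hu
    rw [hi, graftEmbed_of_notMem hv] at h
    cases h
  · obtain ⟨j, hj⟩ := graftEmbed_of_mem (f := f) hv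
    rw [hj, graftEmbed_of_notMem hu] at h
    cases h
  · rw [graftEmbed_of_notMem hu, graftEmbed_of_notMem hv] at h
    exact priv.inj h

theorem graft_label_graftEmbed (hS : S.IsATree) (hf : IsWTE (S.restrict X) T f) {v : V} {a : α}
    (h : S.label v = some a) : (graft S T X f).label (graftEmbed S X f v) = some a := by
  by_cases hv : v ∈ (S.restrict X).nodes
  · by_cases ha : a ∈ X
    · rw [graftEmbed_of_label_mem hv h ha]
      exact hf.2.2.1 v a (restrict_label_eq_some.2 ⟨h, ha⟩)
    · rw [graftEmbed_of_label_notMem hv h ha]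
      exact graft_label_slot_true hf hv h ha
  · rw [graftEmbed_of_notMem hv, graft_label_priv ⟨hS.label_mem h, hv⟩]
    exact h

theorem graft_path_graftEmbed_iff (hS : S.IsATree) (hT : T.IsATree)
    (hf : IsWTE (S.restrict X) T f) {u v : V} (hu : u ∈ S.nodes) (hv : v ∈ S.nodes) :
    (graft S T X f).path (graftEmbed S X f u) (graftEmbed S X f v) ↔ S.path u v := by
  by_cases hu' : u ∈ (S.restrict X).nodes <;> by_cases hv' : v ∈ (S.restrict X).nodes
  · by_cases huv : u = v
    · subst huv
      exact iff_of_true ReflTransGen.refl ReflTransGen.refl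
    obtain ⟨i, hi⟩ := graftEmbed_of_mem (f := f) hu'
    obtain ⟨j, hj⟩ := graftEmbed_of_mem (f := f) hv'
    rw [hi, hj, graft_path_slot_iff_of_ne hT (hf.1 u hu') (huv ∘ hf.2.1 u hu' v hv'),
      ← hf.2.2.2 u hu' v hv', restrict_path_iff hv']
  · obtain ⟨i, hi⟩ := graftEmbed_of_mem (f := f) hu'
    rw [hi, graftEmbed_of_notMem hv', graft_path_slot_priv_iff_of_path hS hT hf hu' ⟨hv, hv'⟩]
  · obtain ⟨j, hj⟩ := graftEmbed_of_mem (f := f) hv'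
    rw [graftEmbed_of_notMem hu', hj]
    exact ⟨fun h => (graftReach_of_path h).elim,
      fun h => ((IsPrivate.of_path hS ⟨hu, hu'⟩ h).2 hv').elim⟩
  · rw [graftEmbed_of_notMem hu', graftEmbed_of_notMem hv', graft_path_priv_iff hS ⟨hu, hu'⟩]

theorem isWTE_graftEmbed (hS : S.IsATree) (hT : T.IsATree) (hf : IsWTE (S.restrict X) T f) :
    IsWTE S (graft S T X f) (graftEmbed S X f) :=
  ⟨fun _ => graftEmbed_mem_nodes hf, fun _ _ _ _ h => graftEmbed_injective hf h,
    fun _ _ => graft_label_graftEmbed hS hf,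
    fun _ hu _ hv => (graft_path_graftEmbed_iff hS hT hf hu hv).symm⟩

theorem labelSet_graft_subset (hX : S.labelSet ∩ T.labelSet ⊆ X) :
    (graft S T X f).labelSet ⊆ S.labelSet ∪ T.labelSet := by
  rintro a ⟨x, hx⟩
  rcases graft_label_eq_some hX hx with ⟨u, -, hu⟩ | ⟨-, s, hs, -⟩
  exacts [.inr ⟨u, hu⟩, .inl ⟨s, hs⟩]

end Graft

theorem exists_amalgamation_of_isWTE_restrict {S : PreTree α V} {T : PreTree α U} {X : Set α}
    {f : V → U} (hS : S.IsATree) (hT : T.IsATree) (hf : IsWTE (S.restrict X) T f)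
    (hX : S.labelSet ∩ T.labelSet ⊆ X) :
    ∃ (N : Type) (G : PreTree α N), G.IsATree ∧ G.labelSet ⊆ S.labelSet ∪ T.labelSet ∧
      (∃ φ, IsWTE S G φ) ∧ ∃ ψ, IsWTE T G ψ := by
  rcases S.nodes.eq_empty_or_nonempty with hne | hne
  · exact ⟨U, T, hT, Set.subset_union_right, ⟨f, isWTE_of_nodes_eq_empty hS hne f⟩,
      ⟨id, isWTE_id T⟩⟩
  · exact ⟨_, graft S T X f, hS.graft hT hf hX hne, labelSet_graft_subset hX,
      ⟨_, isWTE_graftEmbed hS hT hf⟩, ⟨_, isWTE_graft_slot hT⟩⟩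

end PreTree

/-- Two 𝒜-trees are ancestrally compatible iff their restrictions to the
common label set are ancestrally compatible. -/
theorem stmt13 {α V W : Type} (T₁ : PreTree α V) (T₂ : PreTree α W)
    (h₁ : T₁.IsATree) (h₂ : T₂.IsATree) :
    PreTree.AncCompat T₁ T₂ ↔
      PreTree.AncCompat (T₁.restrict (T₁.labelSet ∩ T₂.labelSet))
        (T₂.restrict (T₁.labelSet ∩ T₂.labelSet)) := by
  refine ⟨fun h => h.restrict _ _, ?_⟩
  rintro ⟨U, T, hT, ⟨f, hf⟩, ⟨g, hg⟩⟩
  set X := T₁.labelSet ∩ T₂.labelSet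
  have hTX : (T.restrict X).labelSet ⊆ X := PreTree.labelSet_restrict_subset
  obtain ⟨N₁, G₁, hG₁, hL₁, ⟨φ₁, hφ₁⟩, ⟨ψ₁, hψ₁⟩⟩ :=
    PreTree.exists_amalgamation_of_isWTE_restrict h₁ hT.restrict (hf.restrict_right h₁)
      fun _ ha => hTX ha.2
  obtain ⟨N₂, G₂, hG₂, -, ⟨φ₂, hφ₂⟩, ⟨ψ₂, hψ₂⟩⟩ :=
    PreTree.exists_amalgamation_of_isWTE_restrict h₂ hG₁ ((hg.restrict_right h₂).comp hψ₁)
      fun _ ⟨ha₂, ha⟩ => (hL₁ ha).elim (fun ha₁ => ⟨ha₁, ha₂⟩) fun haT => hTX haT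
  exact ⟨N₂, G₂, hG₂, ⟨_, hφ₁.comp hψ₂⟩, ⟨_, hφ₂⟩⟩
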